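/- Let l be an intersecting supermodular set function on subsets of V(G) with l(∅)=0, and let k ≥ 1 be a real number. Then Θ_l(G) ≤ (1/k)·Θ_{kl}(G), where Θ is computed with respect to the partition of V(G) into l-partition-connected (respectively kl-partition-connected) components. -/

import Mathlib

open Finset

namespace Paper

variable {V : Type*} [Fintype V] [DecidableEq V]

/-- Bool test: the edge `e` has exactly one end in `X`. -/
def crossB (X : Finset V) : Sym2 V → Bool :=
  Sym2.lift ⟨fun a b => xor (decide (a ∈ X)) (decide (b ∈ X)), by
    intro a b; simp [Bool.xor_comm]⟩

/-- Bool test: both ends of the edge `e` lie in `X`. -/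
def bothB (X : Finset V) : Sym2 V → Bool :=
  Sym2.lift ⟨fun a b => decide (a ∈ X) && decide (b ∈ X), by
    intro a b; simp [Bool.and_comm]⟩

/-- A finite multigraph on vertex set `V`: a multiset of loopless edges. -/
structure MGraph (V : Type*) where
  edges : Multiset (Sym2 V)
  loopless : ∀ e ∈ edges, ¬ e.IsDiag

/-- Number of edges of the edge multiset `E` with exactly one end in `X`. -/
def cutE (E : Multiset (Sym2 V)) (X : Finset V) : ℕ :=
  (E.filter (fun e => crossB X e = true)).card

/-- `d_G(X)`: number of edges of `G` with exactly one end in `X`. -/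
def cut (G : MGraph V) (X : Finset V) : ℕ := cutE G.edges X

/-- Degree of a vertex in a multigraph. -/
def deg (G : MGraph V) (v : V) : ℕ := cut G {v}

/-- Number of edges of `E` with both ends in `S`. -/
def insideE (E : Multiset (Sym2 V)) (S : Finset V) : ℕ :=
  (E.filter (fun e => bothB S e = true)).card

/-- `P` is a partition of the vertex set `W` into nonempty parts. -/
def IsPartitionOf (W : Finset V) (P : Finset (Finset V)) : Prop :=
  (∀ A ∈ P, A.Nonempty) ∧ (∀ A ∈ P, ∀ B ∈ P, A ≠ B → Disjoint A B) ∧ P.sup id = W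

/-- Number of edges of `E` joining different parts of `P`. -/
def ePart (E : Multiset (Sym2 V)) (P : Finset (Finset V)) : ℕ :=
  (E.filter (fun e => decide (∀ A ∈ P, bothB A e = false) = true)).card

/-- The edge multiset `E`, restricted to the vertex set `W`, is `l`-partition-connected:
for every partition `P` of `W`, the number of edges (inside `W`) joining different parts
is at least `Σ_{A∈P} l(A) − l(W)`. -/
def LPCOn (E : Multiset (Sym2 V)) (W : Finset V) (l : Finset V → ℝ) : Prop :=
  ∀ P : Finset (Finset V), IsPartitionOf W P →
    (ePart (E.filter (fun e => bothB W e = true)) P : ℝ) ≥ (∑ A ∈ P, l A) - l W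

/-- The multigraph `G` is `l`-partition-connected. -/
def LPC (G : MGraph V) (l : Finset V → ℝ) : Prop := LPCOn G.edges Finset.univ l

/-- `t`-partition-connectivity (constant function `t`). -/
def PC (G : MGraph V) (t : ℝ) : Prop := LPC G (fun _ => t)

/-- `m`-tree-connectivity, via the Nash-Williams–Tutte theorem identified with
`m`-partition-connectivity. -/
def TreeConn (m : ℕ) (G : MGraph V) : Prop := PC G (m : ℝ)

/-- `G` is properly `c`-colorable. -/
def MColorable (c : ℕ) (G : MGraph V) : Prop :=
  ∃ f : V → Fin c, ∀ a b : V, s(a, b) ∈ G.edges → f a ≠ f b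

/-- `G` is bipartite. -/
def MBipartite (G : MGraph V) : Prop := MColorable 2 G

/-- `P` is the partition of `W` into the (vertex sets of the) `l`-partition-connected
components of the graph with edge multiset `E` restricted to `W`: each part induces an
`l`-partition-connected subgraph, and every set inducing an `l`-partition-connected
subgraph lies inside one part. -/
def IsLPCComponents (E : Multiset (Sym2 V)) (W : Finset V) (l : Finset V → ℝ)
    (P : Finset (Finset V)) : Prop :=
  IsPartitionOf W P ∧ (∀ A ∈ P, LPCOn E A l) ∧
    ∀ B ⊆ W, B.Nonempty → LPCOn E B l → ∃ A ∈ P, B ⊆ A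

/-- `Θ_l` computed with respect to the component partition `P` of `W`. -/
noncomputable def ThetaVal (E : Multiset (Sym2 V)) (W : Finset V) (l : Finset V → ℝ)
    (P : Finset (Finset V)) : ℝ :=
  (∑ A ∈ P, l A) - (ePart (E.filter (fun e => bothB W e = true)) P : ℝ)

/-- Intersecting supermodular set function. -/
def IntersectingSupermodular (l : Finset V → ℝ) : Prop :=
  ∀ A B : Finset V, (A ∩ B).Nonempty → l (A ∩ B) + l (A ∪ B) ≥ l A + l B

/-- Nonincreasing set function. -/
def Nonincreasing (l : Finset V → ℝ) : Prop :=
  ∀ A B : Finset V, A.Nonempty → A ⊆ B → l A ≥ l B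

/-- Edge multiset of a simple graph. -/
noncomputable def SGedges (G : SimpleGraph V) : Multiset (Sym2 V) :=
  (Set.toFinite G.edgeSet).toFinset.val

/-- `m`-tree-connectivity of a simple graph, via partition-connectivity. -/
noncomputable def TreeConnSG (m : ℕ) (G : SimpleGraph V) : Prop :=
  LPCOn (SGedges G) Finset.univ (fun _ => (m : ℝ))

/-- Degree in a simple graph. -/
noncomputable def degSG (G : SimpleGraph V) (v : V) : ℕ := Nat.card (G.neighborSet v)

/-- `G` is `t`-tough. -/
def Tough (t : ℝ) (G : SimpleGraph V) : Prop :=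
  ∀ S : Finset V,
    (Nat.card ((G.induce ((↑S : Set V)ᶜ)).ConnectedComponent) : ℝ) ≤
      max 1 ((S.card : ℝ) / t)

/-- Bool test: the two ends of `e` receive different values under `f`. -/
def diffB {c : ℕ} (f : V → Fin c) : Sym2 V → Bool :=
  Sym2.lift ⟨fun a b => decide (f a ≠ f b), by
    intro a b; simp [ne_comm]⟩

end Paper

open Paper

/-
Write `i(X)` for the number of edges of `G` with both ends in `X`. A set `X` is
`l`-partition-connected exactly when `g = l + i` satisfies `∑_{A ∈ P} g(A) ≤ g(X)` for every
partition `P` of `X`, and `Θ_l(G) = ∑_{A ∈ P_l} g(A) - i(V)`. As `g` is intersecting supermodular,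
to see that the union `W` of a partition `S` into such `g`-superadditive sets is again
`g`-superadditive it suffices to test the partitions of `W` coarser than `S`: merging the blocks
that meet a part of `S` does not decrease `∑ g`, by uncrossing that part with them. By induction,
`g = kl + i` is therefore subadditive over every subfamily of the `kl`-components: otherwise
their union would be `kl`-partition-connected. Each `kl`-component is `l`-partition-connected,
so the `kl`-components refine the `l`-components; summing over the latter gives
`∑_{P_l} (kl + i) ≤ ∑_{P_{kl}} (kl + i)`, and the remaining slack is `(k - 1) e_G(P_l) ≥ 0`.
-/
theorem Multiset.countP_eq_sum_map_ite {α : Type*} (p : α → Prop) [DecidablePred p]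
    (s : Multiset α) : s.countP p = (s.map fun a => if p a then 1 else 0).sum := by
  induction s using Multiset.induction_on with
  | empty => simp
  | cons a s ih => simp [Multiset.countP_cons, ih, add_comm]

namespace Paper

variable {V : Type*} [DecidableEq V]

def Refines (S R : Finset (Finset V)) : Prop := ∀ B ∈ S, ∃ C ∈ R, B ⊆ C

namespace IsPartitionOf

variable {W A B C : Finset V} {P Q R S : Finset (Finset V)}

theorem subset_of_mem (hP : IsPartitionOf W P) (hA : A ∈ P) : A ⊆ W :=
  hP.2.2 ▸ le_sup (f := id) hA

theorem exists_mem (hP : IsPartitionOf W P) {v : V} (hv : v ∈ W) : ∃ A ∈ P, v ∈ A := by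
  rw [← hP.2.2] at hv
  exact mem_sup.mp hv

theorem eq_of_mem_of_mem (hP : IsPartitionOf W P) (hA : A ∈ P) (hB : B ∈ P) {v : V}
    (hvA : v ∈ A) (hvB : v ∈ B) : A = B := by
  by_contra hne
  exact disjoint_left.mp (hP.2.1 A hA B hB hne) hvA hvB

theorem nonempty (hP : IsPartitionOf W P) (hW : W.Nonempty) : P.Nonempty := by
  rw [← hP.2.2] at hW
  obtain ⟨v, hv⟩ := hW
  obtain ⟨A, hA, -⟩ := mem_sup.mp hv
  exact ⟨A, hA⟩

theorem of_subset (hQ : IsPartitionOf W Q) (hS : S ⊆ Q) : IsPartitionOf (S.sup id) S :=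
  ⟨fun B hB => hQ.1 B (hS hB), fun A hA B hB => hQ.2.1 A (hS hA) B (hS hB), rfl⟩

theorem sup_filter_subset (hS : IsPartitionOf W S) (hR : IsPartitionOf W R)
    (href : Refines S R) (hC : C ∈ R) : (S.filter (· ⊆ C)).sup id = C := by
  refine le_antisymm (Finset.sup_le fun B hB => (mem_filter.mp hB).2) fun v hv => ?_
  obtain ⟨B, hB, hvB⟩ := hS.exists_mem (hR.subset_of_mem hC hv)
  obtain ⟨C', hC', hBC'⟩ := href B hB
  obtain rfl := hR.eq_of_mem_of_mem hC' hC (hBC' hvB) hv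
  exact mem_sup.mpr ⟨B, mem_filter.mpr ⟨hB, hBC'⟩, hvB⟩

theorem filter_subset_nonempty (hS : IsPartitionOf W S) (hR : IsPartitionOf W R)
    (href : Refines S R) (hC : C ∈ R) : (S.filter (· ⊆ C)).Nonempty := by
  obtain ⟨v, hv⟩ := hR.1 C hC
  rw [← hS.sup_filter_subset hR href hC] at hv
  obtain ⟨B, hB, -⟩ := mem_sup.mp hv
  exact ⟨B, hB⟩

theorem sum_sum_filter_subset (hS : IsPartitionOf W S) (hR : IsPartitionOf W R)
    (href : Refines S R) (g : Finset V → ℝ) :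
    ∑ C ∈ R, ∑ B ∈ S with B ⊆ C, g B = ∑ B ∈ S, g B := by
  rw [← sum_biUnion]
  · congr 1
    ext B
    simp only [mem_biUnion, mem_filter]
    exact ⟨fun ⟨_, _, hB, _⟩ => hB, fun hB => (href B hB).imp fun C ⟨hC, hBC⟩ => ⟨hC, hB, hBC⟩⟩
  · intro C hC C' hC' hne
    refine disjoint_left.mpr fun B hB hB' => hne ?_
    rw [mem_filter] at hB hB'
    obtain ⟨v, hv⟩ := hS.1 B hB.1
    exact hR.eq_of_mem_of_mem hC hC' (hB.2 hv) (hB'.2 hv)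

theorem image_inter (hR : IsPartitionOf W R) (hBW : B ⊆ W) :
    IsPartitionOf B ((R.filter fun C => (B ∩ C).Nonempty).image (B ∩ ·)) := by
  refine ⟨?_, ?_, ?_⟩
  · simp only [mem_image, mem_filter]
    rintro _ ⟨C, ⟨-, hne⟩, rfl⟩
    exact hne
  · simp only [mem_image, mem_filter]
    rintro _ ⟨C, ⟨hC, -⟩, rfl⟩ _ ⟨C', ⟨hC', -⟩, rfl⟩ hne
    exact (hR.2.1 C hC C' hC' fun h => hne (h ▸ rfl)).mono inter_subset_right inter_subset_right
  · refine le_antisymm (Finset.sup_le fun D hD => ?_) fun v hv => ?_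
    · obtain ⟨C, -, rfl⟩ := mem_image.mp hD
      exact inter_subset_left
    · obtain ⟨C, hC, hvC⟩ := hR.exists_mem (hBW hv)
      have hvBC : v ∈ B ∩ C := mem_inter.mpr ⟨hv, hvC⟩
      exact mem_sup.mpr ⟨B ∩ C, mem_image_of_mem _ (mem_filter.mpr ⟨hC, v, hvBC⟩), hvBC⟩

theorem insert_sup_sdiff (hR : IsPartitionOf W R) (hQ : Q ⊆ R) (hQne : Q.Nonempty) :
    IsPartitionOf W (insert (Q.sup id) (R \ Q)) := by
  have hdisj : ∀ A ∈ R \ Q, Disjoint A (Q.sup id) := fun A hA =>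
    Finset.disjoint_sup_right.mpr fun C hC =>
      hR.2.1 A (mem_sdiff.mp hA).1 C (hQ hC) fun h => (mem_sdiff.mp hA).2 (h ▸ hC)
  refine ⟨?_, ?_, ?_⟩
  · simp only [mem_insert]
    rintro A (rfl | hA)
    · obtain ⟨C, hC⟩ := hQne
      exact (hR.1 C (hQ hC)).mono (le_sup (f := id) hC)
    · exact hR.1 A (mem_sdiff.mp hA).1
  · simp only [mem_insert]
    rintro A (rfl | hA) B (rfl | hB) hne
    · exact absurd rfl hne
    · exact (hdisj B hB).symm
    · exact hdisj A hA
    · exact hR.2.1 A (mem_sdiff.mp hA).1 B (mem_sdiff.mp hB).1 hne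
  · rw [sup_insert, id, ← sup_union, union_sdiff_of_subset hQ, hR.2.2]

end IsPartitionOf

theorem bothB_mk (X : Finset V) (a b : V) : bothB X s(a, b) = true ↔ a ∈ X ∧ b ∈ X := by
  simp [bothB]

theorem ite_forall_bothB_add_sum_ite_bothB {P : Finset (Finset V)}
    (hP : ∀ A ∈ P, ∀ B ∈ P, A ≠ B → Disjoint A B) (e : Sym2 V) :
    ((if ∀ A ∈ P, bothB A e = false then 1 else 0) +
      ∑ A ∈ P, if bothB A e = true then 1 else 0 : ℕ) = 1 := by
  induction e using Sym2.inductionOn with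
  | hf a b =>
  by_cases h : ∃ A ∈ P, bothB A s(a, b) = true
  · obtain ⟨A, hA, hAe⟩ := h
    rw [if_neg fun h' => by simp [h' A hA] at hAe, sum_eq_single_of_mem A hA, if_pos hAe]
    intro A' hA' hne
    rw [if_neg]
    intro hA'e
    exact disjoint_left.mp (hP A' hA' A hA hne) ((bothB_mk _ _ _).mp hA'e).1
      ((bothB_mk _ _ _).mp hAe).1
  · push Not at h
    rw [if_pos fun A hA => Bool.eq_false_iff.mpr (h A hA),
      sum_eq_zero fun A hA => if_neg (h A hA), add_zero]

theorem insideE_add_insideE_le (E : Multiset (Sym2 V)) (X Y : Finset V) :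
    insideE E X + insideE E Y ≤ insideE E (X ∩ Y) + insideE E (X ∪ Y) := by
  simp only [insideE, ← Multiset.countP_eq_card_filter, Multiset.countP_eq_sum_map_ite,
    ← Multiset.sum_map_add]
  refine Multiset.sum_map_le_sum_map _ _ fun e _ => ?_
  induction e using Sym2.inductionOn with
  | hf a b =>
    simp only [bothB_mk, mem_inter, mem_union]
    split_ifs <;> tauto

namespace IntersectingSupermodular

variable {f g : Finset V → ℝ}

theorem add (hf : IntersectingSupermodular f) (hg : IntersectingSupermodular g) :
    IntersectingSupermodular fun A => f A + g A := fun A B h => by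
  linarith [hf A B h, hg A B h]

theorem const_mul (hf : IntersectingSupermodular f) {k : ℝ} (hk : 0 ≤ k) :
    IntersectingSupermodular fun A => k * f A := fun A B h => by
  simp only [ge_iff_le, ← mul_add]
  exact mul_le_mul_of_nonneg_left (hf A B h) hk

theorem add_sum_le (hg : IntersectingSupermodular g) (B : Finset V) {T : Finset (Finset V)}
    (hT : (T : Set (Finset V)).PairwiseDisjoint id) (hmeet : ∀ C ∈ T, (B ∩ C).Nonempty) :
    g B + ∑ C ∈ T, g C ≤ ∑ C ∈ T, g (B ∩ C) + g (B ∪ T.sup id) := by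
  induction T using Finset.induction_on with
  | empty => simp
  | @insert C T hCT ih =>
    rw [coe_insert, Set.pairwiseDisjoint_insert] at hT
    have hCdisj : Disjoint (T.sup id) C := Finset.disjoint_sup_left.mpr fun C' hC' =>
      (hT.2 C' hC' fun h => hCT (h ▸ hC')).symm
    have hinter : (B ∪ T.sup id) ∩ C = B ∩ C := by
      rw [union_inter_distrib_right, disjoint_iff_inter_eq_empty.mp hCdisj, union_empty]
    have hsm := hg (B ∪ T.sup id) C (hinter ▸ hmeet C (mem_insert_self C T))
    rw [hinter] at hsm
    rw [sum_insert hCT, sum_insert hCT, sup_insert, id, sup_eq_union, union_comm C,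
      ← union_assoc]
    linarith [ih hT.1 fun C' hC' => hmeet C' (mem_insert_of_mem hC')]

end IntersectingSupermodular

theorem intersectingSupermodular_insideE (E : Multiset (Sym2 V)) :
    IntersectingSupermodular fun A => (insideE E A : ℝ) := fun A B _ => by
  simp only [ge_iff_le]
  exact_mod_cast insideE_add_insideE_le E A B

def SuperadditiveOn (g : Finset V → ℝ) (X : Finset V) : Prop :=
  ∀ P, IsPartitionOf X P → ∑ A ∈ P, g A ≤ g X

section Superadditive

variable {g : Finset V → ℝ} {W B : Finset V} {R S : Finset (Finset V)}

theorem SuperadditiveOn.sum_filter_le (hB : SuperadditiveOn g B) (hg : IntersectingSupermodular g)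
    (hR : IsPartitionOf W R) (hBW : B ⊆ W) :
    ∑ C ∈ R with (B ∩ C).Nonempty, g C ≤ g ((R.filter fun C => (B ∩ C).Nonempty).sup id) := by
  set T := R.filter fun C => (B ∩ C).Nonempty
  have hTR : T ⊆ R := filter_subset _ _
  have hmeet : ∀ C ∈ T, (B ∩ C).Nonempty := fun C hC => (mem_filter.mp hC).2
  have hBT : B ⊆ T.sup id := fun v hv => by
    obtain ⟨C, hC, hvC⟩ := hR.exists_mem (hBW hv)
    exact mem_sup.mpr ⟨C, mem_filter.mpr ⟨hC, v, mem_inter.mpr ⟨hv, hvC⟩⟩, hvC⟩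
  have hinj : Set.InjOn (B ∩ ·) T := fun C hC C' hC' (heq : B ∩ C = B ∩ C') => by
    obtain ⟨v, hv⟩ := hmeet C hC
    exact hR.eq_of_mem_of_mem (hTR hC) (hTR hC') (mem_inter.mp hv).2
      (mem_inter.mp (heq ▸ hv)).2
  have htrace := hB _ (hR.image_inter hBW)
  rw [sum_image hinj] at htrace
  have hchain := hg.add_sum_le B (fun C hC C' hC' => hR.2.1 C (hTR hC) C' (hTR hC')) hmeet
  rw [union_eq_right.mpr hBT] at hchain
  linarith

theorem superadditiveOn_of_forall_refines (hg : IntersectingSupermodular g)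
    (hS : IsPartitionOf W S) (hSg : ∀ B ∈ S, SuperadditiveOn g B)
    (h : ∀ R, IsPartitionOf W R → Refines S R → ∑ C ∈ R, g C ≤ g W) :
    SuperadditiveOn g W := by
  intro R hR
  induction hn : R.card using Nat.strong_induction_on generalizing R with
  | _ n ih =>
  by_cases href : Refines S R
  · exact h R hR href
  obtain ⟨B, hBS, hB⟩ : ∃ B ∈ S, ∀ C ∈ R, ¬B ⊆ C := by simpa [Refines] using href
  have hBW := hS.subset_of_mem hBS
  set T := R.filter fun C => (B ∩ C).Nonempty
  have hTR : T ⊆ R := filter_subset _ _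
  have hT : 1 < T.card := by
    obtain ⟨v, hv⟩ := hS.1 B hBS
    obtain ⟨C, hC, hvC⟩ := hR.exists_mem (hBW hv)
    obtain ⟨w, hw, hwC⟩ := not_subset.mp (hB C hC)
    obtain ⟨C', hC', hwC'⟩ := hR.exists_mem (hBW hw)
    refine one_lt_card.mpr ⟨C, mem_filter.mpr ⟨hC, v, mem_inter.mpr ⟨hv, hvC⟩⟩,
      C', mem_filter.mpr ⟨hC', w, mem_inter.mpr ⟨hw, hwC'⟩⟩, ?_⟩
    rintro rfl
    exact hwC hwC'
  have hTne : T.Nonempty := card_pos.mp (by omega)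
  have hnotMem : T.sup id ∉ R \ T := fun hmem => by
    obtain ⟨C, hC⟩ := hTne
    obtain ⟨v, hv⟩ := hR.1 C (hTR hC)
    rw [mem_sdiff] at hmem
    exact hmem.2 (hR.eq_of_mem_of_mem hmem.1 (hTR hC) (le_sup (f := id) hC hv) hv ▸ hC)
  have hcard : (insert (T.sup id) (R \ T)).card < n := by
    have := card_insert_le (T.sup id) (R \ T)
    rw [card_sdiff_of_subset hTR] at this
    have := card_le_card hTR
    omega
  calc ∑ C ∈ R, g C = ∑ C ∈ R \ T, g C + ∑ C ∈ T, g C := (sum_sdiff hTR).symm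
    _ ≤ ∑ C ∈ R \ T, g C + g (T.sup id) := by
      gcongr
      exact (hSg B hBS).sum_filter_le hg hR hBW
    _ = ∑ C ∈ insert (T.sup id) (R \ T), g C := by rw [sum_insert hnotMem, add_comm]
    _ ≤ g W := ih _ hcard _ (hR.insert_sup_sdiff hTR hTne) rfl

end Superadditive

section Maximal

variable {g : Finset V → ℝ} {W : Finset V} {Q R : Finset (Finset V)}
  (hg : IntersectingSupermodular g) (hQ : IsPartitionOf W Q)
  (hQg : ∀ A ∈ Q, SuperadditiveOn g A)
  (hmax : ∀ B ⊆ W, B.Nonempty → SuperadditiveOn g B → ∃ A ∈ Q, B ⊆ A)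
include hg hQ hQg hmax

theorem sup_le_sum_of_maximal {S : Finset (Finset V)} (hSQ : S ⊆ Q) (hSne : S.Nonempty) :
    g (S.sup id) ≤ ∑ B ∈ S, g B := by
  induction S using Finset.strongInduction with
  | H S ih =>
  -- Otherwise `S.sup id` is `g`-superadditive, hence contained in a single part of `Q`.
  by_contra! hlt
  have hS := hQ.of_subset hSQ
  obtain ⟨B₀, hB₀⟩ := hSne
  have hWne : (S.sup id).Nonempty := (hQ.1 B₀ (hSQ hB₀)).mono (le_sup (f := id) hB₀)
  have hglued : SuperadditiveOn g (S.sup id) := by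
    refine superadditiveOn_of_forall_refines hg hS (fun B hB => hQg B (hSQ hB)) fun R hR href => ?_
    obtain ⟨C, rfl⟩ | hRnt := (hR.nonempty hWne).exists_eq_singleton_or_nontrivial
    · simp [← hR.2.2]
    refine le_trans ?_ ((hS.sum_sum_filter_subset hR href g).trans_lt hlt).le
    refine sum_le_sum fun C hC => ?_
    have hsup := hS.sup_filter_subset hR href hC
    have hss : S.filter (· ⊆ C) ⊂ S := by
      refine (filter_subset _ _).ssubset_of_ne fun heq => ?_
      obtain ⟨C', hC', hne⟩ := hRnt.exists_ne C
      obtain ⟨v, hv⟩ := hR.1 C' hC'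
      rw [heq] at hsup
      have hvC : v ∈ C := hsup ▸ hR.subset_of_mem hC' hv
      exact hne (hR.eq_of_mem_of_mem hC' hC hv hvC)
    simpa only [hsup] using
      ih _ hss ((filter_subset _ _).trans hSQ) (hS.filter_subset_nonempty hR href hC)
  obtain ⟨A, hA, hSA⟩ := hmax _ (Finset.sup_le fun B hB => hQ.subset_of_mem (hSQ hB)) hWne hglued
  have hSA : ∀ B ∈ S, B = A := fun B hB => by
    obtain ⟨v, hv⟩ := hQ.1 B (hSQ hB)
    exact hQ.eq_of_mem_of_mem (hSQ hB) hA hv (hSA (le_sup (f := id) hB hv))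
  obtain rfl : S = {A} := eq_singleton_iff_unique_mem.mpr ⟨hSA B₀ hB₀ ▸ hB₀, hSA⟩
  simp at hlt

theorem sum_le_sum_of_maximal (hR : IsPartitionOf W R) (href : Refines Q R) :
    ∑ C ∈ R, g C ≤ ∑ B ∈ Q, g B := by
  refine le_trans (sum_le_sum fun C hC => ?_) (hQ.sum_sum_filter_subset hR href g).le
  simpa only [hQ.sup_filter_subset hR href hC] using sup_le_sum_of_maximal hg hQ hQg hmax
    (filter_subset _ _) (hQ.filter_subset_nonempty hR href hC)

end Maximal

section LPC

variable [Fintype V] {E : Multiset (Sym2 V)} {W X : Finset V} {l : Finset V → ℝ}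
  {P Q R : Finset (Finset V)}

theorem ePart_filter_add_sum_insideE (hP : IsPartitionOf X P) :
    ePart (E.filter fun e => bothB X e = true) P + ∑ A ∈ P, insideE E A = insideE E X := by
  set F := E.filter fun e => bothB X e = true
  have hinside : ∀ A ∈ P, insideE E A = F.countP fun e => bothB A e = true := by
    intro A hA
    rw [insideE, Multiset.countP_eq_card_filter, Multiset.filter_filter]
    congr 1
    refine Multiset.filter_congr fun e _ => (and_iff_left_of_imp fun hAe => ?_).symm
    induction e using Sym2.inductionOn with
    | hf a b =>
      rw [bothB_mk] at hAe ⊢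
      exact ⟨hP.subset_of_mem hA hAe.1, hP.subset_of_mem hA hAe.2⟩
  rw [sum_congr rfl hinside, ePart, ← Multiset.countP_eq_card_filter, insideE]
  calc _ = (F.map fun e => (if ∀ A ∈ P, bothB A e = false then 1 else 0) +
          ∑ A ∈ P, if bothB A e = true then 1 else 0).sum := by
        simp only [Multiset.countP_eq_sum_map_ite, Multiset.sum_map_add, Multiset.sum_map_sum,
          decide_eq_true_eq]
    _ = (F.map fun _ => 1).sum :=
        congrArg _ (Multiset.map_congr rfl fun e _ => by
          convert ite_forall_bothB_add_sum_ite_bothB hP.2.1 e)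
    _ = F.card := by simp

theorem ePart_filter_eq (hP : IsPartitionOf X P) :
    (ePart (E.filter fun e => bothB X e = true) P : ℝ) =
      insideE E X - ∑ A ∈ P, (insideE E A : ℝ) := by
  rw [← ePart_filter_add_sum_insideE hP]
  push_cast
  ring

theorem lpcOn_iff_superadditiveOn :
    LPCOn E X l ↔ SuperadditiveOn (fun A => l A + insideE E A) X := by
  refine forall₂_congr fun P hP => ?_
  rw [ePart_filter_eq hP, sum_add_distrib, ge_iff_le]
  constructor <;> intro h <;> linarith

theorem thetaVal_eq (hP : IsPartitionOf W P) :
    ThetaVal E W l P = ∑ A ∈ P, (l A + insideE E A) - insideE E W := by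
  rw [ThetaVal, ePart_filter_eq hP, sum_add_distrib]
  ring

theorem LPCOn.of_const_mul {k : ℝ} (hk : 1 ≤ k) (h : LPCOn E X fun A => k * l A) :
    LPCOn E X l := by
  intro P hP
  have hkP := h P hP
  rw [← mul_sum, ← mul_sub] at hkP
  have hcross : (0 : ℝ) ≤ ePart (E.filter fun e => bothB X e = true) P := Nat.cast_nonneg _
  rcases le_or_gt (∑ A ∈ P, l A - l X) 0 with hle | hpos
  · linarith
  · linarith [le_mul_of_one_le_left hpos.le hk]

theorem IsLPCComponents.sum_le_sum_of_refines (hl : IntersectingSupermodular l)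
    (hQ : IsLPCComponents E W l Q) (hR : IsPartitionOf W R) (href : Refines Q R) :
    ∑ C ∈ R, (l C + insideE E C) ≤ ∑ B ∈ Q, (l B + insideE E B) :=
  sum_le_sum_of_maximal (hl.add (intersectingSupermodular_insideE E)) hQ.1
    (fun A hA => lpcOn_iff_superadditiveOn.mp (hQ.2.1 A hA))
    (fun B hBW hBne hB => hQ.2.2 B hBW hBne (lpcOn_iff_superadditiveOn.mpr hB)) hR href

end LPC

end Paper

theorem stmt15_general {V : Type*} [Fintype V] [DecidableEq V] (G : MGraph V)
    (l : Finset V → ℝ) (hsm : IntersectingSupermodular l)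
    (k : ℝ) (hk : 1 ≤ k) :
    ∀ P Q : Finset (Finset V),
      IsLPCComponents G.edges Finset.univ l P →
      IsLPCComponents G.edges Finset.univ (fun A => k * l A) Q →
      ThetaVal G.edges Finset.univ l P ≤
        (1 / k) * ThetaVal G.edges Finset.univ (fun A => k * l A) Q := by
  intro P Q hP hQ
  have hk0 : 0 < k := by linarith
  have hQP : Refines Q P := fun B hB =>
    hP.2.2 B (subset_univ B) (hQ.1.1 B hB) ((hQ.2.1 B hB).of_const_mul hk)
  have hsum := hQ.sum_le_sum_of_refines (hsm.const_mul hk0.le) hP.1 hQP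
  have hcross : ∑ A ∈ P, (insideE G.edges A : ℝ) ≤ insideE G.edges univ := by
    exact_mod_cast (Nat.le_add_left _ _).trans (ePart_filter_add_sum_insideE hP.1).le
  rw [thetaVal_eq hP.1, thetaVal_eq hQ.1, one_div, inv_mul_eq_div, le_div_iff₀ hk0]
  rw [sum_add_distrib, ← mul_sum] at hsum
  rw [sum_add_distrib]
  linarith [mul_nonneg (sub_nonneg.mpr hk) (sub_nonneg.mpr hcross)]

theorem stmt15 {V : Type*} [Fintype V] [DecidableEq V] (G : MGraph V)
    (l : Finset V → ℝ) (hl0 : l ∅ = 0) (hsm : IntersectingSupermodular l)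
    (k : ℝ) (hk : 1 ≤ k) :
    ∀ P Q : Finset (Finset V),
      IsLPCComponents G.edges Finset.univ l P →
      IsLPCComponents G.edges Finset.univ (fun A => k * l A) Q →
      ThetaVal G.edges Finset.univ l P ≤
        (1 / k) * ThetaVal G.edges Finset.univ (fun A => k * l A) Q :=
  stmt15_general G l hsm k hk
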